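/- (Concentration of the proper component at the phase transition.) Fix K > 0. Let (l_n) be positive reals with l_n → +∞ and ε_n = K·√(l_n)·exp(−l_n). Then for every c > 0, the normalized mass outside [−c, c] of the proper component vanishes: (∫_{|β| > c} (exp{l_n·ε_n²/(β² + ε_n²)} − 1) dβ) / (∫_ℝ (exp{l_n·ε_n²/(β² + ε_n²)} − 1) dβ) → 0 as n → ∞; consequently the normalized proper component converges narrowly to the Dirac measure at 0. -/

import Mathlib

open Filter MeasureTheory Real Topology

/-!
On `|β| > c` the exponent `u = l ε² / (β² + ε²)` is at most `l ε² / c²`, and `eᵘ - 1 ≤ u eᵘ`,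
so the tail mass is at most `π l ε exp (l ε² / c²)`, using `∫ (β² + ε²)⁻¹ = π / ε`. On `[-ε, ε]`
the exponent is at least `l / 2`, so the total mass is at least `2 ε (exp (l / 2) - 1)`. The
factor `ε` cancels and the ratio is at most `π / 2 · exp (l ε² / c²) · l / (exp (l / 2) - 1)`.
At the phase transition `l ε² = K² l² e^{-2l} → 0`, while `l / (exp (l / 2) - 1) → 0`.
-/

lemma integrable_inv_sq_add_sq {e : ℝ} (he : e ≠ 0) :
    Integrable fun β : ℝ => (β ^ 2 + e ^ 2)⁻¹ := by
  refine ((integrable_inv_one_add_sq.comp_div he).const_mul (e ^ 2)⁻¹).congr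
    (.of_forall fun β => ?_)
  field_simp
  ring

lemma integral_inv_sq_add_sq_eq {e : ℝ} (he : 0 < e) :
    ∫ β : ℝ, (β ^ 2 + e ^ 2)⁻¹ = π / e := by
  have hscale : (fun β : ℝ => (β ^ 2 + e ^ 2)⁻¹) = fun β => (e ^ 2)⁻¹ * (1 + (β / e) ^ 2)⁻¹ := by
    funext β
    field_simp
    ring
  rw [hscale, integral_const_mul, Measure.integral_comp_div (fun x => (1 + x ^ 2)⁻¹),
    integral_univ_inv_one_add_sq, smul_eq_mul, abs_of_pos he]
  field_simp

lemma exp_sub_one_le_mul_exp (x : ℝ) : exp x - 1 ≤ x * exp x := by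
  have h := mul_le_mul_of_nonneg_left (add_one_le_exp (-x)) (exp_pos x).le
  rw [← exp_add, add_neg_cancel, exp_zero] at h
  linarith

/-- Unnormalized proper component of the SIC prior, with `l = λ / (2σ²)`. -/
noncomputable def sicProperDensity (l ε β : ℝ) : ℝ :=
  exp (l * (ε ^ 2 / (β ^ 2 + ε ^ 2))) - 1

@[simp]
lemma sicProperDensity_zero_right (l β : ℝ) : sicProperDensity l 0 β = 0 := by
  simp [sicProperDensity]

lemma sicProperDensity_abs (l ε β : ℝ) : sicProperDensity l |ε| β = sicProperDensity l ε β := by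
  simp [sicProperDensity, sq_abs]

section
variable {l ε : ℝ}

lemma sicProperDensity_nonneg (hl : 0 ≤ l) (β : ℝ) : 0 ≤ sicProperDensity l ε β :=
  sub_nonneg.mpr (one_le_exp (by positivity))

lemma sicProperDensity_le {M : ℝ} (hl : 0 ≤ l) (β : ℝ) (hM : l * (ε ^ 2 / (β ^ 2 + ε ^ 2)) ≤ M) :
    sicProperDensity l ε β ≤ l * ε ^ 2 * exp M * (β ^ 2 + ε ^ 2)⁻¹ :=
  calc sicProperDensity l ε β
      ≤ l * (ε ^ 2 / (β ^ 2 + ε ^ 2)) * exp (l * (ε ^ 2 / (β ^ 2 + ε ^ 2))) :=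
        exp_sub_one_le_mul_exp _
    _ ≤ l * (ε ^ 2 / (β ^ 2 + ε ^ 2)) * exp M := by gcongr
    _ = l * ε ^ 2 * exp M * (β ^ 2 + ε ^ 2)⁻¹ := by ring

lemma integrable_sicProperDensity (hl : 0 ≤ l) (hε : ε ≠ 0) :
    Integrable (sicProperDensity l ε) := by
  refine ((integrable_inv_sq_add_sq hε).const_mul (l * ε ^ 2 * exp l)).mono'
    (by unfold sicProperDensity; fun_prop : Measurable _).aestronglyMeasurable
    (.of_forall fun β => ?_)
  rw [norm_of_nonneg (sicProperDensity_nonneg hl β)]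
  refine sicProperDensity_le hl β (mul_le_of_le_one_right hl ?_)
  exact div_le_one_of_le₀ (by nlinarith [sq_nonneg β]) (by positivity)

lemma setIntegral_sicProperDensity_tail_le {c : ℝ} (hl : 0 ≤ l) (hε : 0 < ε) (hc : 0 < c) :
    ∫ β in {b : ℝ | c < |b|}, sicProperDensity l ε β ≤ π * l * ε * exp (l * ε ^ 2 / c ^ 2) := by
  have hdom := (integrable_inv_sq_add_sq hε.ne').const_mul (l * ε ^ 2 * exp (l * ε ^ 2 / c ^ 2))
  calc ∫ β in {b : ℝ | c < |b|}, sicProperDensity l ε β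
      ≤ ∫ β in {b : ℝ | c < |b|}, l * ε ^ 2 * exp (l * ε ^ 2 / c ^ 2) * (β ^ 2 + ε ^ 2)⁻¹ := by
        refine setIntegral_mono_on (integrable_sicProperDensity hl hε.ne').integrableOn
          hdom.integrableOn (measurableSet_lt measurable_const measurable_abs) fun β hβ => ?_
        refine sicProperDensity_le hl β ?_
        have hβ : c ^ 2 ≤ β ^ 2 + ε ^ 2 := by
          nlinarith [sq_abs β, sq_nonneg ε, show c < |β| from hβ]
        rw [mul_div_assoc]
        gcongr
    _ ≤ ∫ β, l * ε ^ 2 * exp (l * ε ^ 2 / c ^ 2) * (β ^ 2 + ε ^ 2)⁻¹ :=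
        setIntegral_le_integral hdom (.of_forall fun β => by positivity)
    _ = π * l * ε * exp (l * ε ^ 2 / c ^ 2) := by
        rw [integral_const_mul, integral_inv_sq_add_sq_eq hε]
        field_simp

lemma integral_sicProperDensity_ge (hl : 0 ≤ l) (hε : 0 < ε) :
    2 * ε * (exp (l / 2) - 1) ≤ ∫ β, sicProperDensity l ε β := by
  have hint := integrable_sicProperDensity hl hε.ne'
  calc 2 * ε * (exp (l / 2) - 1) = ∫ _ in Set.Icc (-ε) ε, (exp (l / 2) - 1) := by
        rw [setIntegral_const, volume_real_Icc, smul_eq_mul, max_eq_left (by linarith)]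
        ring
    _ ≤ ∫ β in Set.Icc (-ε) ε, sicProperDensity l ε β := by
        refine setIntegral_mono_on (integrableOn_const measure_Icc_lt_top.ne) hint.integrableOn
          measurableSet_Icc fun β hβ => ?_
        have hβ : β ^ 2 ≤ ε ^ 2 := sq_le_sq' hβ.1 hβ.2
        have hhalf : 1 / 2 ≤ ε ^ 2 / (β ^ 2 + ε ^ 2) := by
          rw [le_div_iff₀ (by positivity)]
          linarith
        unfold sicProperDensity
        gcongr
        linarith [mul_le_mul_of_nonneg_left hhalf hl]
    _ ≤ ∫ β, sicProperDensity l ε β :=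
        setIntegral_le_integral hint (.of_forall (sicProperDensity_nonneg hl))

lemma sicProperMass_tail_ratio_le {c : ℝ} (hl : 0 < l) (hc : 0 < c) :
    (∫ β in {b : ℝ | c < |b|}, sicProperDensity l ε β) / ∫ β, sicProperDensity l ε β
      ≤ π / 2 * exp (l * ε ^ 2 / c ^ 2) * (l / (exp (l / 2) - 1)) := by
  have hden : 0 < exp (l / 2) - 1 := by linarith [add_one_lt_exp (half_pos hl).ne']
  rcases eq_or_ne ε 0 with rfl | hε
  · simp only [sicProperDensity_zero_right, integral_zero, div_zero]
    positivity
  simp_rw [← sicProperDensity_abs l ε, ← sq_abs ε]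
  have hε' : 0 < |ε| := abs_pos.mpr hε
  calc (∫ β in {b : ℝ | c < |b|}, sicProperDensity l |ε| β) / ∫ β, sicProperDensity l |ε| β
      ≤ π * l * |ε| * exp (l * |ε| ^ 2 / c ^ 2) / (2 * |ε| * (exp (l / 2) - 1)) :=
        div_le_div₀ (by positivity) (setIntegral_sicProperDensity_tail_le hl.le hε' hc)
          (by positivity) (integral_sicProperDensity_ge hl.le hε')
    _ = π / 2 * exp (l * |ε| ^ 2 / c ^ 2) * (l / (exp (l / 2) - 1)) := by
        field_simp

end

lemma tendsto_div_exp_half_sub_one_atTop :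
    Tendsto (fun t => t / (exp (t / 2) - 1)) atTop (𝓝 0) := by
  have hnum : Tendsto (fun t => t * exp (-(t / 2))) atTop (𝓝 0) := by
    have h := ((tendsto_pow_mul_exp_neg_atTop_nhds_zero 1).comp
      (tendsto_id.atTop_div_const two_pos)).const_mul 2
    rw [mul_zero] at h
    refine h.congr fun t => ?_
    simp only [Function.comp_apply, id, pow_one]
    ring
  have hden : Tendsto (fun t => 1 - exp (-(t / 2))) atTop (𝓝 1) := by
    simpa using (tendsto_exp_neg_atTop_nhds_zero.comp
      (tendsto_id.atTop_div_const two_pos)).const_sub 1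
  have h := hnum.div hden one_ne_zero
  rw [zero_div] at h
  refine h.congr fun t => ?_
  have hE := (exp_pos (t / 2)).ne'
  have hden_eq : 1 - (exp (t / 2))⁻¹ = (exp (t / 2) - 1) * (exp (t / 2))⁻¹ := by field_simp
  rw [Pi.div_apply, exp_neg, hden_eq, mul_div_mul_right _ _ (inv_ne_zero hE)]

lemma tendsto_mul_sq_sqrt_mul_exp_neg_atTop (K : ℝ) :
    Tendsto (fun t => t * (K * √t * exp (-t)) ^ 2) atTop (𝓝 0) := by
  have h := ((tendsto_pow_mul_exp_neg_atTop_nhds_zero 2).comp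
    (tendsto_id.const_mul_atTop two_pos)).const_mul (K ^ 2 / 4)
  rw [mul_zero] at h
  refine h.congr' ((eventually_ge_atTop 0).mono fun t ht => ?_)
  simp only [Function.comp_apply, id]
  rw [mul_pow, mul_pow, mul_pow, sq_sqrt ht, show -(2 * t) = -t + -t by ring, exp_add]
  ring

theorem sic_proper_component_concentration_phase_transition_general (K : ℝ)
    (l : ℕ → ℝ) (hl : Tendsto l atTop atTop)
    (ε : ℕ → ℝ) (hε : ε = fun n => K * Real.sqrt (l n) * Real.exp (-l n))
    (c : ℝ) (hc : 0 < c) :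
    Tendsto (fun n =>
        (∫ β in {b : ℝ | c < |b|},
            (Real.exp (l n * ((ε n) ^ 2 / (β ^ 2 + (ε n) ^ 2))) - 1)) /
          ∫ β : ℝ, (Real.exp (l n * ((ε n) ^ 2 / (β ^ 2 + (ε n) ^ 2))) - 1))
      atTop (nhds 0) := by
  subst hε
  have hexponent : Tendsto (fun n => l n * (K * √(l n) * exp (-l n)) ^ 2 / c ^ 2) atTop (𝓝 0) := by
    simpa using ((tendsto_mul_sq_sqrt_mul_exp_neg_atTop K).comp hl).div_const (c ^ 2)
  have hbound := (((tendsto_exp_nhds_zero_nhds_one.comp hexponent).const_mul (π / 2)).mul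
    (tendsto_div_exp_half_sub_one_atTop.comp hl))
  rw [mul_one, mul_zero] at hbound
  have hl_pos := hl.eventually_gt_atTop 0
  refine squeeze_zero' (hl_pos.mono fun n hn => ?_) (hl_pos.mono fun n hn => ?_) hbound
  · exact div_nonneg (setIntegral_nonneg (measurableSet_lt measurable_const measurable_abs)
      fun β _ => sicProperDensity_nonneg hn.le β) (integral_nonneg (sicProperDensity_nonneg hn.le))
  · exact sicProperMass_tail_ratio_le hn hc

/-- **Concentration of the proper component at the phase transition.** With
`l_n → ∞` and `ε_n = K √(l_n) exp(−l_n)`, for every `c > 0` the normalized mass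
of the proper component outside `[−c, c]` vanishes. -/
theorem sic_proper_component_concentration_phase_transition (K : ℝ) (hK : 0 < K)
    (l : ℕ → ℝ) (hl_pos : ∀ n, 0 < l n) (hl : Tendsto l atTop atTop)
    (ε : ℕ → ℝ) (hε : ε = fun n => K * Real.sqrt (l n) * Real.exp (-l n))
    (c : ℝ) (hc : 0 < c) :
    Tendsto (fun n =>
        (∫ β in {b : ℝ | c < |b|},
            (Real.exp (l n * ((ε n) ^ 2 / (β ^ 2 + (ε n) ^ 2))) - 1)) /
          ∫ β : ℝ, (Real.exp (l n * ((ε n) ^ 2 / (β ^ 2 + (ε n) ^ 2))) - 1))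
      atTop (nhds 0) :=
  sic_proper_component_concentration_phase_transition_general K l hl ε hε c hc
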